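/- arXiv:2009.07797 — 7 statements merged into one kernel-verified Lean document; each statement's English description precedes it below -/
import Mathlib

section
/- Let a : ℕ → ℝ be a sequence with 0 < a_n ≤ 1 for all n. If the sequence (ln a_n)_n is completely monotone, then the sequence (a_n)_n itself is completely monotone. -/
/-- The `n`-th iterated forward difference of a sequence, evaluated at `k`. -/
noncomputable def fdiff (a : ℕ → ℝ) (n k : ℕ) : ℝ :=
  ∑ i ∈ Finset.range (n + 1), (-1 : ℝ) ^ i * (n.choose i : ℝ) * a (k + i)

/-- A sequence is completely monotone if all iterated forward differences of
order `n ≥ 1` are nonnegative. -/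
def CompletelyMonotone (a : ℕ → ℝ) : Prop :=
  ∀ n : ℕ, 1 ≤ n → ∀ k : ℕ, 0 ≤ fdiff a n k

/-!
Let `d := -Δ log a`; by hypothesis every difference `(-1) ^ n Δ^n d` of order `n ≥ 0` is
nonnegative. Nonnegativity of the differences up to a fixed order is preserved by products
(by induction on the order, since `-Δ (f g) = f (-Δ g) + (-Δ f) g(· + 1)`) and by convergent sums
with nonnegative coefficients, so it holds for `exp d - 1 = ∑ d ^ (i + 1) / (i + 1)!` at every order.
The factorisation `a m - a (m + 1) = a (m + 1) (exp (d m) - 1)` then passes it from the differences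
of `a` of order `≤ n` to those of order `n + 1`.
-/

open Finset fwdDiff

lemma fdiff_eq_neg_one_pow_mul_fwdDiff_iter (a : ℕ → ℝ) (n k : ℕ) :
    fdiff a n k = (-1) ^ n * (Δ_[1])^[n] a k := by
  rw [fwdDiff_iter_eq_sum_shift, mul_sum]
  refine sum_congr rfl fun i hi => ?_
  have hin : i ≤ n := Nat.lt_succ_iff.mp (mem_range.mp hi)
  have hsign : (-1 : ℝ) ^ n * (-1) ^ (n - i) = (-1) ^ i := by
    rw [← pow_add, ← Nat.add_sub_assoc hin, show n + n - i = i + 2 * (n - i) by omega, pow_add,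
      pow_mul, neg_one_sq, one_pow, mul_one]
  rw [zsmul_eq_mul, smul_eq_mul, mul_one, ← hsign]
  push_cast
  ring

lemma fdiff_zero (a : ℕ → ℝ) (k : ℕ) : fdiff a 0 k = a k := by
  simp [fdiff]

lemma fdiff_succ (a : ℕ → ℝ) (n k : ℕ) : fdiff a (n + 1) k = fdiff (-Δ_[1] a) n k := by
  rw [fdiff_eq_neg_one_pow_mul_fwdDiff_iter, fdiff_eq_neg_one_pow_mul_fwdDiff_iter,
    Function.iterate_succ_apply, ← neg_one_smul ℝ (Δ_[1] a), fwdDiff_iter_const_smul]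
  simp [pow_succ]

lemma fdiff_add (f g : ℕ → ℝ) (n k : ℕ) : fdiff (f + g) n k = fdiff f n k + fdiff g n k := by
  simp only [fdiff, Pi.add_apply, mul_add, sum_add_distrib]

lemma fdiff_comp_add_one (a : ℕ → ℝ) (n k : ℕ) :
    fdiff (fun m => a (m + 1)) n k = fdiff a n (k + 1) := by
  simp only [fdiff, add_right_comm]

lemma fdiff_const_smul (c : ℝ) (a : ℕ → ℝ) (n k : ℕ) : fdiff (c • a) n k = c * fdiff a n k := by
  simp only [fdiff, Pi.smul_apply, smul_eq_mul, mul_sum]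
  exact sum_congr rfl fun _ _ => by ring

lemma hasSum_fdiff {F : ℕ → ℕ → ℝ} {a : ℕ → ℝ} (h : ∀ m, HasSum (fun i => F i m) (a m))
    (n k : ℕ) : HasSum (fun i => fdiff (F i) n k) (fdiff a n k) :=
  hasSum_sum fun j _ => (h (k + j)).mul_left _

lemma neg_fwdDiff_mul (f g : ℕ → ℝ) :
    -Δ_[1] (f * g) = f * -Δ_[1] g + -Δ_[1] f * fun m => g (m + 1) := by
  ext m; simp only [fwdDiff, Pi.mul_apply, Pi.neg_apply, Pi.add_apply]; ring

lemma Real.hasSum_pow_succ_div_factorial (x : ℝ) :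
    HasSum (fun i : ℕ => x ^ (i + 1) / (i + 1).factorial) (Real.exp x - 1) := by
  have h := NormedSpace.expSeries_div_hasSum_exp x
  rw [← Real.exp_eq_exp_ℝ, ← hasSum_nat_add_iff' 1] at h
  simpa using h

def FdiffNonnegUpTo (n : ℕ) (a : ℕ → ℝ) : Prop := ∀ j ≤ n, ∀ k, 0 ≤ fdiff a j k

namespace FdiffNonnegUpTo

variable {n : ℕ} {a f g : ℕ → ℝ}

lemma mono {m : ℕ} (h : FdiffNonnegUpTo n a) (hmn : m ≤ n) : FdiffNonnegUpTo m a :=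
  fun j hj => h j (hj.trans hmn)

lemma zero_iff : FdiffNonnegUpTo 0 a ↔ 0 ≤ a := by
  simp [FdiffNonnegUpTo, fdiff_zero, Pi.le_def]

lemma nonneg (h : FdiffNonnegUpTo n a) : 0 ≤ a :=
  zero_iff.mp (h.mono n.zero_le)

lemma succ_iff : FdiffNonnegUpTo (n + 1) a ↔ 0 ≤ a ∧ FdiffNonnegUpTo n (-Δ_[1] a) := by
  refine ⟨fun h => ⟨h.nonneg, fun j hj k => ?_⟩, fun ⟨h0, h⟩ j hj k => ?_⟩
  · rw [← fdiff_succ]; exact h (j + 1) (by omega) k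
  · rcases j with _ | j
    · rw [fdiff_zero]; exact h0 k
    · rw [fdiff_succ]; exact h j (by omega) k

lemma add (hf : FdiffNonnegUpTo n f) (hg : FdiffNonnegUpTo n g) : FdiffNonnegUpTo n (f + g) :=
  fun j hj k => by rw [fdiff_add]; exact add_nonneg (hf j hj k) (hg j hj k)

lemma comp_add_one (h : FdiffNonnegUpTo n a) : FdiffNonnegUpTo n (fun m => a (m + 1)) :=
  fun j hj k => by rw [fdiff_comp_add_one]; exact h j hj (k + 1)

lemma mul (hf : FdiffNonnegUpTo n f) (hg : FdiffNonnegUpTo n g) : FdiffNonnegUpTo n (f * g) := by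
  induction n generalizing f g with
  | zero => exact zero_iff.mpr (mul_nonneg (zero_iff.mp hf) (zero_iff.mp hg))
  | succ n ih =>
    obtain ⟨hf0, hf'⟩ := succ_iff.mp hf
    obtain ⟨hg0, hg'⟩ := succ_iff.mp hg
    refine succ_iff.mpr ⟨mul_nonneg hf0 hg0, ?_⟩
    rw [neg_fwdDiff_mul]
    exact (ih (hf.mono n.le_succ) hg').add (ih hf' (hg.mono n.le_succ).comp_add_one)

lemma pow (h : FdiffNonnegUpTo n a) (m : ℕ) : FdiffNonnegUpTo n (a ^ (m + 1)) := by
  induction m with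
  | zero => simpa using h
  | succ m ih => rw [pow_succ]; exact ih.mul h

lemma const_smul (h : FdiffNonnegUpTo n a) {c : ℝ} (hc : 0 ≤ c) : FdiffNonnegUpTo n (c • a) :=
  fun j hj k => by rw [fdiff_const_smul]; exact mul_nonneg hc (h j hj k)

lemma of_hasSum {F : ℕ → ℕ → ℝ} (hF : ∀ i, FdiffNonnegUpTo n (F i))
    (h : ∀ m, HasSum (fun i => F i m) (a m)) : FdiffNonnegUpTo n a :=
  fun j hj k => (hasSum_fdiff h j k).nonneg fun i => hF i j hj k

lemma exp_sub_one (h : FdiffNonnegUpTo n a) : FdiffNonnegUpTo n (fun m => Real.exp (a m) - 1) :=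
  of_hasSum (fun i => (h.pow i).const_smul (inv_nonneg.mpr (i + 1).factorial.cast_nonneg))
    fun m => by simpa [div_eq_inv_mul] using Real.hasSum_pow_succ_div_factorial (a m)

end FdiffNonnegUpTo

lemma completelyMonotone_iff_fdiffNonnegUpTo_neg_fwdDiff {a : ℕ → ℝ} :
    CompletelyMonotone a ↔ ∀ n, FdiffNonnegUpTo n (-Δ_[1] a) := by
  refine ⟨fun h n j _ k => ?_, fun h n hn k => ?_⟩
  · rw [← fdiff_succ]; exact h (j + 1) j.succ_pos k
  · obtain ⟨n, rfl⟩ := Nat.exists_eq_add_of_le' hn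
    rw [fdiff_succ]; exact h n n le_rfl k

lemma FdiffNonnegUpTo.of_neg_fwdDiff_eq_mul {a e : ℕ → ℝ} (ha : 0 ≤ a)
    (he : ∀ n, FdiffNonnegUpTo n e) (hae : -Δ_[1] a = (fun m => a (m + 1)) * e) (n : ℕ) :
    FdiffNonnegUpTo n a := by
  induction n with
  | zero => exact zero_iff.mpr ha
  | succ n ih =>
    refine succ_iff.mpr ⟨ha, ?_⟩
    rw [hae]
    exact ih.comp_add_one.mul (he n)

theorem stmt2_general (a : ℕ → ℝ) (ha : ∀ n, 0 < a n)
    (h : CompletelyMonotone (fun n => Real.log (a n))) :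
    CompletelyMonotone a := by
  set d := -Δ_[1] (fun n => Real.log (a n))
  have hd : ∀ n, FdiffNonnegUpTo n d := completelyMonotone_iff_fdiffNonnegUpTo_neg_fwdDiff.mp h
  have hfactor : -Δ_[1] a = (fun m => a (m + 1)) * fun m => Real.exp (d m) - 1 := by
    ext m
    have := (ha (m + 1)).ne'
    simp only [d, fwdDiff, Pi.neg_apply, Pi.mul_apply, neg_sub, Real.exp_sub, Real.exp_log (ha _)]
    field_simp
  have key := FdiffNonnegUpTo.of_neg_fwdDiff_eq_mul (fun m => (ha m).le)
    (fun n => (hd n).exp_sub_one) hfactor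
  exact completelyMonotone_iff_fdiffNonnegUpTo_neg_fwdDiff.mpr fun n =>
    (FdiffNonnegUpTo.succ_iff.mp (key (n + 1))).2

theorem stmt2 (a : ℕ → ℝ) (ha : ∀ n, 0 < a n) (ha1 : ∀ n, a n ≤ 1)
    (h : CompletelyMonotone (fun n => Real.log (a n))) :
    CompletelyMonotone a :=
  stmt2_general a ha h
end

section
/- Let a : ℕ → ℝ be a non-decreasing sequence with a_n > 0 for all n. Then (ln a_n)_n is completely alternating if and only if the quotient sequence b defined by b_n = a_n / a_{n+1} satisfies that (ln b_n)_n is completely alternating. -/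
/-- A sequence is completely alternating if all iterated forward differences of
order `n ≥ 1` are nonpositive. -/
def CompletelyAlternating (a : ℕ → ℝ) : Prop :=
  ∀ n : ℕ, 1 ≤ n → ∀ k : ℕ, fdiff a n k ≤ 0

lemma fdiff_rec (a : ℕ → ℝ) (n k : ℕ) :
    fdiff a (n+1) k = fdiff a n k - fdiff a n (k+1) := by
  unfold fdiff
  rw [Finset.sum_range_succ' _ (n+1)]
  have hsplit : ∀ i ∈ Finset.range (n+1),
      (-1:ℝ)^(i+1) * ((n+1).choose (i+1) : ℝ) * a (k+(i+1))
      = (-1:ℝ)^(i+1) * (n.choose (i+1) : ℝ) * a (k+(i+1))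
        - (-1:ℝ)^i * (n.choose i : ℝ) * a ((k+1)+i) := by
    intro i _
    have : ((n+1).choose (i+1) : ℝ) = (n.choose i : ℝ) + (n.choose (i+1) : ℝ) := by
      exact_mod_cast Nat.choose_succ_succ n i
    rw [this, show (k+1)+i = k+(i+1) by ring]
    ring
  rw [Finset.sum_congr rfl hsplit, Finset.sum_sub_distrib]
  have h2 : ∑ i ∈ Finset.range (n+1), (-1:ℝ)^(i+1) * (n.choose (i+1) : ℝ) * a (k+(i+1))
      = ∑ i ∈ Finset.range n, (-1:ℝ)^(i+1) * (n.choose (i+1) : ℝ) * a (k+(i+1)) := by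
    rw [Finset.sum_range_succ]
    simp [Nat.choose_succ_self]
  rw [h2, Finset.sum_range_succ' (fun i => (-1:ℝ)^i * (n.choose i : ℝ) * a (k+i)) n]
  simp only [Nat.choose_zero_right, Nat.cast_one]
  ring

lemma fdiff_diffseq (a : ℕ → ℝ) (n k : ℕ) :
    fdiff (fun m => a m - a (m+1)) n k = fdiff a n k - fdiff a n (k+1) := by
  unfold fdiff
  rw [← Finset.sum_sub_distrib]
  refine Finset.sum_congr rfl fun i _ => ?_
  rw [show (k+1)+i = (k+i)+1 by ring]
  ring

theorem stmt4 (a : ℕ → ℝ) (ha : ∀ n, 0 < a n) (hmono : Monotone a) :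
    CompletelyAlternating (fun n => Real.log (a n)) ↔
      CompletelyAlternating (fun n => Real.log (a n / a (n + 1))) := by
  set L : ℕ → ℝ := fun n => Real.log (a n) with hL
  have hq : (fun n => Real.log (a n / a (n + 1))) = fun n => L n - L (n+1) := by
    funext n
    exact Real.log_div (ha n).ne' (ha (n+1)).ne'
  rw [hq]
  have key : ∀ n k, fdiff (fun m => L m - L (m+1)) n k = fdiff L (n+1) k := by
    intro n k
    rw [fdiff_diffseq, fdiff_rec]
  constructor
  · intro h n hn k
    rw [key]
    exact h (n+1) (by omega) k
  · intro h n hn k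
    match n, hn with
    | 1, _ =>
      have : fdiff L 1 k = L k - L (k+1) := by
        simp [fdiff, Finset.sum_range_succ]
        ring
      rw [this]
      have := Real.log_le_log (ha k) (hmono (Nat.le_succ k))
      simpa [L] using sub_nonpos.mpr this
    | (m+2), _ =>
      rw [show m+2 = (m+1)+1 from rfl, ← key]
      exact h (m+1) (by omega) k
end

section
/- Let α, α̂ : ℕ → ℝ be sequences with α_n > 0 and α̂_n > 0 for all n, each converging to a nonzero limit. If α_n · α_{n+1} = α̂_n · α̂_{n+1} for all n (that is, the Aluthge transforms of the corresponding weighted shifts coincide), then α_n = α̂_n for all n. In other words, the Aluthge transform is injective on the class of weighted shifts whose weights approach a nonzero limit. -/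
/-!
The ratios `r n = α n / α' n` satisfy `r n * r (n + 1) = 1`, so `r` is `2`-periodic; being
convergent (to `L / L'`), it is constant. A positive constant `c` with `c * c = 1` is `1`.
-/

open Filter Function Topology

theorem Function.Periodic.eq_of_tendsto {X : Type*} [TopologicalSpace X] [T2Space X]
    {f : ℕ → X} {p : ℕ} (hf : Periodic f p) (hp : 0 < p) {l : X}
    (h : Tendsto f atTop (𝓝 l)) (n : ℕ) : f n = l := by
  have hsub : Tendsto (fun k => n + k * p) atTop atTop :=
    tendsto_atTop_mono (fun k => le_add_left (Nat.le_mul_of_pos_right k hp)) tendsto_id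
  have hshift : (fun k => f (n + k * p)) = fun _ => f n := funext fun k => hf.nat_mul k n
  have := h.comp hsub
  rw [comp_def, hshift] at this
  exact tendsto_nhds_unique tendsto_const_nhds this

theorem periodic_two_of_mul_succ_eq_one {G : Type*} [DivisionMonoid G] {r : ℕ → G}
    (h : ∀ n, r n * r (n + 1) = 1) : Periodic r 2 := fun n => by
  rw [eq_inv_of_mul_eq_one_right (h (n + 1)), eq_inv_of_mul_eq_one_right (h n), inv_inv]

theorem div_mul_div_succ_eq_one {K : Type*} [Field K] {a b : ℕ → K} (hb : ∀ n, b n ≠ 0)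
    (h : ∀ n, a n * a (n + 1) = b n * b (n + 1)) (n : ℕ) :
    a n / b n * (a (n + 1) / b (n + 1)) = 1 := by
  rw [div_mul_div_comm, h, div_self (mul_ne_zero (hb n) (hb (n + 1)))]

theorem stmt10_general (α α' : ℕ → ℝ) (hα : ∀ n, 0 < α n) (hα' : ∀ n, 0 < α' n)
    (L L' : ℝ) (hL' : L' ≠ 0)
    (hlim : Filter.Tendsto α Filter.atTop (nhds L))
    (hlim' : Filter.Tendsto α' Filter.atTop (nhds L'))
    (heq : ∀ n, α n * α (n + 1) = α' n * α' (n + 1)) :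
    ∀ n, α n = α' n := by
  have hα'0 : ∀ n, α' n ≠ 0 := fun n => (hα' n).ne'
  have hr := div_mul_div_succ_eq_one hα'0 heq
  have hconst : ∀ n, α n / α' n = L / L' :=
    (periodic_two_of_mul_succ_eq_one hr).eq_of_tendsto two_pos (hlim.div hlim' hL')
  have hsq : L / L' * (L / L') = 1 := by simpa only [hconst] using hr 0
  have hpos : 0 < L / L' := hconst 0 ▸ div_pos (hα 0) (hα' 0)
  have hone : L / L' = 1 := (mul_self_eq_one_iff.mp hsq).resolve_right (by linarith)
  intro n
  exact (div_eq_one_iff_eq (hα'0 n)).mp ((hconst n).trans hone)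

theorem stmt10 (α α' : ℕ → ℝ) (hα : ∀ n, 0 < α n) (hα' : ∀ n, 0 < α' n)
    (L L' : ℝ) (hL : L ≠ 0) (hL' : L' ≠ 0)
    (hlim : Filter.Tendsto α Filter.atTop (nhds L))
    (hlim' : Filter.Tendsto α' Filter.atTop (nhds L'))
    (heq : ∀ n, α n * α (n + 1) = α' n * α' (n + 1)) :
    ∀ n, α n = α' n :=
  stmt10_general α α' hα hα' L L' hL' hlim hlim' heq
end

section
/- Let α : ℕ → ℝ with α_n > 0 for all n, and for each j let δ⁽ʲ⁾ : ℕ → ℝ satisfy 0 < δ⁽ʲ⁾_n ≤ 1 for all n with (ln δ⁽ʲ⁾_n)_n completely alternating. If sup_n |α_n − δ⁽ʲ⁾_n| → 0 as j → ∞ (i.e., the weighted shift W_α is the norm limit of the contractive MID shifts W_{δ⁽ʲ⁾}), then (ln α_n)_n is completely alternating, i.e., W_α is moment infinitely divisible. -/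
theorem stmt13 (α : ℕ → ℝ) (hα : ∀ n, 0 < α n)
    (δ : ℕ → ℕ → ℝ)
    (hδpos : ∀ j n, 0 < δ j n) (hδ1 : ∀ j n, δ j n ≤ 1)
    (hδCA : ∀ j, CompletelyAlternating (fun n => Real.log (δ j n)))
    (hconv : ∀ ε > (0 : ℝ), ∃ J : ℕ, ∀ j ≥ J, ∀ n, |α n - δ j n| ≤ ε) :
    CompletelyAlternating (fun n => Real.log (α n)) := by
  intro n hn k
  -- pointwise convergence δ j m → α m
  have hpt : ∀ m, Filter.Tendsto (fun j => δ j m) Filter.atTop (nhds (α m)) := by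
    intro m
    rw [Metric.tendsto_atTop]
    intro ε hε
    obtain ⟨J, hJ⟩ := hconv (ε / 2) (by linarith)
    exact ⟨J, fun j hj => by
      have := hJ j hj m
      rw [Real.dist_eq, abs_sub_comm]
      linarith⟩
  have hlog : ∀ m, Filter.Tendsto (fun j => Real.log (δ j m)) Filter.atTop
      (nhds (Real.log (α m))) := fun m =>
    ((Real.continuousAt_log (hα m).ne').tendsto).comp (hpt m)
  have hfd : Filter.Tendsto (fun j => fdiff (fun m => Real.log (δ j m)) n k)
      Filter.atTop (nhds (fdiff (fun m => Real.log (α m)) n k)) := by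
    unfold fdiff
    exact tendsto_finset_sum _ fun i _ => (hlog (k + i)).const_mul _
  exact le_of_tendsto hfd (Filter.Eventually.of_forall fun j => hδCA j n hn k)
end

section
/- Let (μ_j) be Borel probability measures on [0,1] converging weakly to a probability measure μ on [0,1] (i.e., ∫ f dμ_j → ∫ f dμ for every continuous real-valued f on [0,1]). Set γ⁽ʲ⁾_n = ∫ tⁿ dμ_j(t) and γ_n = ∫ tⁿ dμ(t), and assume γ⁽ʲ⁾_n > 0 and γ_n > 0 for all j, n. If for each j the sequence (ln γ⁽ʲ⁾_n)_n is completely monotone, then (ln γ_n)_n is completely monotone; consequently the weighted shift with moment sequence γ is contractive and moment infinitely divisible. -/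
open MeasureTheory

theorem stmt14
    (μs : ℕ → Measure (Set.Icc (0 : ℝ) 1)) (μ : Measure (Set.Icc (0 : ℝ) 1))
    (hμs : ∀ j, IsProbabilityMeasure (μs j)) (hμ : IsProbabilityMeasure μ)
    (hweak : ∀ f : C(Set.Icc (0 : ℝ) 1, ℝ),
      Filter.Tendsto (fun j => ∫ x, f x ∂(μs j)) Filter.atTop
        (nhds (∫ x, f x ∂μ)))
    (γs : ℕ → ℕ → ℝ) (γ : ℕ → ℝ)
    (hγs : ∀ j n, γs j n = ∫ x, ((x : ℝ) ^ n) ∂(μs j))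
    (hγ : ∀ n, γ n = ∫ x, ((x : ℝ) ^ n) ∂μ)
    (hγspos : ∀ j n, 0 < γs j n) (hγpos : ∀ n, 0 < γ n)
    (hCM : ∀ j, CompletelyMonotone (fun n => Real.log (γs j n))) :
    CompletelyMonotone (fun n => Real.log (γ n)) ∧ ∀ n, γ (n + 1) ≤ γ n := by
  have hmom : ∀ n : ℕ, Filter.Tendsto (fun j => γs j n) Filter.atTop (nhds (γ n)) := by
    intro n
    have hc : Continuous fun x : Set.Icc (0 : ℝ) 1 => (x : ℝ) ^ n := by
      exact (continuous_subtype_val.pow n)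
    have := hweak ⟨fun x => (x : ℝ) ^ n, hc⟩
    simp only [ContinuousMap.coe_mk] at this
    simpa only [← hγs, ← hγ] using this
  have hlog : ∀ n : ℕ, Filter.Tendsto (fun j => Real.log (γs j n)) Filter.atTop
      (nhds (Real.log (γ n))) := fun n =>
    ((Real.continuousAt_log (hγpos n).ne').tendsto).comp (hmom n)
  constructor
  · intro n hn k
    have htd : Filter.Tendsto (fun j => fdiff (fun m => Real.log (γs j m)) n k)
        Filter.atTop (nhds (fdiff (fun m => Real.log (γ m)) n k)) := by
      unfold fdiff
      exact tendsto_finset_sum _ fun i _ => (tendsto_const_nhds.mul (hlog (k + i)))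
    exact ge_of_tendsto htd (Filter.Eventually.of_forall fun j => hCM j n hn k)
  · intro n
    haveI := hμ
    have hint : ∀ m : ℕ, Integrable (fun x : Set.Icc (0 : ℝ) 1 => (x : ℝ) ^ m) μ :=
      fun m => (continuous_subtype_val.pow m).integrable_of_hasCompactSupport (HasCompactSupport.of_compactSpace _)
    rw [hγ, hγ]
    refine integral_mono (hint (n + 1)) (hint n) fun x => ?_
    exact pow_le_pow_of_le_one x.2.1 x.2.2 (Nat.le_succ n)
end

section
/- Let α : ℕ → ℝ satisfy α_n > 0 for all n and suppose (ln α_n)_n is completely alternating. Then for all integers p ≥ 1 and k ≥ 0, the subsequence β defined by β_n = α_{p·n + k} also satisfies that (ln β_n)_n is completely alternating. (Thus every p-subshift of a moment infinitely divisible weighted shift is moment infinitely divisible.) -/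
lemma fdiff_pascal (a : ℕ → ℝ) (n k : ℕ) :
    fdiff a (n + 1) k = fdiff a n k - fdiff a n (k + 1) := by
  have h1 : fdiff a (n + 1) k
      = a k + ∑ i ∈ Finset.range (n + 1),
          (-1 : ℝ) ^ (i+1) * ((n+1).choose (i+1) : ℝ) * a (k + (i+1)) := by
    rw [fdiff, Finset.sum_range_succ']
    simp [add_comm]
  have h2 : ∀ i, ((n+1).choose (i+1) : ℝ) = (n.choose i : ℝ) + (n.choose (i+1) : ℝ) := by
    intro i
    rw [Nat.choose_succ_succ]
    push_cast
    ring
  rw [h1]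
  have h3 : ∑ i ∈ Finset.range (n + 1),
      (-1 : ℝ) ^ (i+1) * ((n+1).choose (i+1) : ℝ) * a (k + (i+1))
      = (∑ i ∈ Finset.range (n + 1), (-1 : ℝ) ^ (i+1) * (n.choose i : ℝ) * a (k + (i+1)))
        + ∑ i ∈ Finset.range (n + 1), (-1 : ℝ) ^ (i+1) * (n.choose (i+1) : ℝ) * a (k + (i+1)) := by
    rw [← Finset.sum_add_distrib]
    apply Finset.sum_congr rfl
    intro i _
    rw [h2]; ring
  rw [h3]
  have h4 : ∑ i ∈ Finset.range (n + 1), (-1 : ℝ) ^ (i+1) * (n.choose i : ℝ) * a (k + (i+1))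
      = - fdiff a n (k + 1) := by
    rw [fdiff, ← Finset.sum_neg_distrib]
    apply Finset.sum_congr rfl
    intro i _
    have : k + (i + 1) = k + 1 + i := by omega
    rw [this]; ring
  have h5 : a k + ∑ i ∈ Finset.range (n + 1), (-1 : ℝ) ^ (i+1) * (n.choose (i+1) : ℝ) * a (k + (i+1))
      = fdiff a n k := by
    have hz : ((n.choose (n+1) : ℕ) : ℝ) = 0 := by
      rw [Nat.choose_eq_zero_of_lt (by omega)]; norm_num
    rw [Finset.sum_range_succ, hz, fdiff, Finset.sum_range_succ']
    simp
    exact add_comm _ _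
  rw [h4]
  linarith [h5]

lemma fdiff_step (a : ℕ → ℝ) (n k : ℕ) :
    fdiff a (n + 1) k = fdiff (fun j => a j - a (j + 1)) n k := by
  rw [fdiff_pascal]
  rw [fdiff, fdiff, fdiff, ← Finset.sum_sub_distrib]
  apply Finset.sum_congr rfl
  intro i _
  have : k + 1 + i = k + i + 1 := by omega
  rw [this]; ring

lemma fdiff_sum {ι : Type*} (s : Finset ι) (F : ι → ℕ → ℝ) (n m : ℕ) :
    fdiff (fun i => ∑ j ∈ s, F j i) n m = ∑ j ∈ s, fdiff (F j) n m := by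
  simp only [fdiff, Finset.mul_sum]
  exact Finset.sum_comm

lemma sub_fdiff_nonpos (p : ℕ) (hp : 1 ≤ p) :
    ∀ n : ℕ, ∀ a : ℕ → ℝ, (∀ m, fdiff a n m ≤ 0) →
      ∀ k m, fdiff (fun i => a (p * i + k)) n m ≤ 0 := by
  intro n
  induction n with
  | zero =>
    intro a h k m
    simpa [fdiff] using h (p * m + k)
  | succ n ih =>
    intro a h k m
    have hD : ∀ m, fdiff (fun j => a j - a (j + 1)) n m ≤ 0 := by
      intro m; rw [← fdiff_step]; exact h m
    have step : fdiff (fun i => a (p * i + k)) (n + 1) m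
        = fdiff (fun i => a (p * i + k) - a (p * (i + 1) + k)) n m :=
      fdiff_step (fun i => a (p * i + k)) n m
    have key : (fun i => a (p * i + k) - a (p * (i + 1) + k))
        = fun i => ∑ j ∈ Finset.range p,
            (fun i => a (p * i + (k + j)) - a (p * i + (k + j) + 1)) i := by
      funext i
      have e1 : p * (i + 1) + k = p * i + k + p := by ring
      rw [e1]
      have hs := Finset.sum_range_sub' (f := fun j => a (p * i + k + j)) p
      simp only [Nat.add_zero, add_zero] at hs
      rw [← hs]
      apply Finset.sum_congr rfl
      intro j _
      have e3 : p * i + (k + j) = p * i + k + j := by ring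
      have e4 : p * i + (k + j) + 1 = p * i + k + (j + 1) := by ring
      simp only [e3, e4]
      have e5 : p * i + k + (j + 1) = p * i + k + j + 1 := by ring
      rw [e5]
    rw [step, key, fdiff_sum]
    apply Finset.sum_nonpos
    intro j _
    exact ih (fun t => a t - a (t + 1)) hD (k + j) m

theorem stmt15 (α : ℕ → ℝ) (hα : ∀ n, 0 < α n)
    (hCA : CompletelyAlternating (fun n => Real.log (α n)))
    (p k : ℕ) (hp : 1 ≤ p) :
    CompletelyAlternating (fun n => Real.log (α (p * n + k))) := by
  intro n hn m
  exact sub_fdiff_nonpos p hp n (fun i => Real.log (α i)) (fun m => hCA n hn m) k m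
end

section
/- Given real numbers a, b with 0 < a < b < 1, there exists a sequence α : ℕ → ℝ with 0 < α_n ≤ 1 for all n, α_0 = √a, α_1 = √b, such that (ln α_n)_n is completely alternating (so the corresponding contractive weighted shift is moment infinitely divisible) and α_2 ≠ α_1 (so the shift is not flat). -/
theorem stmt17 (a b : ℝ) (ha : 0 < a) (hab : a < b) (hb : b < 1) :
    ∃ α : ℕ → ℝ, (∀ n, 0 < α n) ∧ (∀ n, α n ≤ 1) ∧
      α 0 = Real.sqrt a ∧ α 1 = Real.sqrt b ∧
      CompletelyAlternating (fun n => Real.log (α n)) ∧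
      α 2 ≠ α 1 := by
  have ha1 : a < 1 := hab.trans hb
  have hb0 : 0 < b := ha.trans hab
  have hla : Real.log a < 0 := Real.log_neg ha ha1
  have hlb : Real.log b < 0 := Real.log_neg hb0 hb
  have hlab : Real.log a < Real.log b := Real.log_lt_log ha hab
  set c : ℝ := Real.log a / 2 with hc
  set t : ℝ := Real.log b / Real.log a with ht
  have hc0 : c < 0 := by simp [hc]; linarith
  have ht0 : 0 < t := div_pos_of_neg_of_neg hlb hla
  have htla : t * Real.log a = Real.log b := div_mul_cancel₀ _ hla.ne
  have ht1 : t < 1 := by nlinarith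
  refine ⟨fun n => Real.exp (c * t ^ n), fun n => Real.exp_pos _, ?_, ?_, ?_, ?_, ?_⟩
  · intro n
    have : c * t ^ n ≤ 0 :=
      mul_nonpos_of_nonpos_of_nonneg hc0.le (pow_nonneg ht0.le n)
    calc Real.exp (c * t ^ n) ≤ Real.exp 0 := Real.exp_le_exp.mpr this
      _ = 1 := Real.exp_zero
  · simp [hc, ← Real.log_sqrt ha.le, Real.exp_log (Real.sqrt_pos.mpr ha)]
  · have hct : c * t ^ 1 = Real.log b / 2 := by
      rw [pow_one, hc]; linear_combination htla / 2
    show Real.exp (c * t ^ 1) = _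
    rw [hct, ← Real.log_sqrt hb0.le, Real.exp_log (Real.sqrt_pos.mpr hb0)]
  · intro n hn k
    have hlog : ∀ m : ℕ, Real.log (Real.exp (c * t ^ m)) = c * t ^ m := fun m =>
      Real.log_exp _
    have key : fdiff (fun m => Real.log (Real.exp (c * t ^ m))) n k
        = c * t ^ k * ((-t) + 1) ^ n := by
      rw [add_pow, Finset.mul_sum, fdiff]
      apply Finset.sum_congr rfl
      intro i _
      rw [hlog]
      rw [neg_pow, one_pow, pow_add]
      ring
    rw [key]
    have h1 : (0:ℝ) ≤ (-t + 1) ^ n := pow_nonneg (by linarith) n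
    have h2 : (0:ℝ) ≤ t ^ k := pow_nonneg ht0.le k
    exact mul_nonpos_of_nonpos_of_nonneg
      (mul_nonpos_of_nonpos_of_nonneg hc0.le h2) h1
  · intro h
    have h2 : c * t ^ 2 = c * t ^ 1 := Real.exp_injective h
    have h3 : t ^ 2 = t := by
      rw [pow_one] at h2
      rcases mul_left_cancel₀ hc0.ne h2 with h3
      exact h3
    nlinarith [h3]
end
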